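/- arXiv:1603.04301 — 2 statements merged into one kernel-verified Lean document; each statement's English description precedes it below -/
import Mathlib

section
/- Let G be a simple connected graph on n vertices that is not a complete graph. Then the second smallest normalized Laplacian eigenvalue satisfies λ₂(G) ≤ 1. -/
open Matrix Finset BigOperators

namespace NLap

variable {V : Type} [Fintype V] [DecidableEq V]

/-- The normalized Laplacian matrix `𝓛(G) = D^{-1/2} (D - A) D^{-1/2}` of a simple graph. -/
noncomputable def normLap (G : SimpleGraph V) [DecidableRel G.Adj] : Matrix V V ℝ :=
  Matrix.diagonal (fun v => (Real.sqrt (G.degree v : ℝ))⁻¹) * G.lapMatrix ℝ *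
    Matrix.diagonal (fun v => (Real.sqrt (G.degree v : ℝ))⁻¹)

/-- The `k`-th smallest eigenvalue (1-indexed, counted with multiplicity) of a real matrix:
the `k`-th element of the sorted multiset of roots of its characteristic polynomial. -/
noncomputable def nthEig (M : Matrix V V ℝ) (k : ℕ) : ℝ :=
  (M.charpoly.roots.sort (· ≤ ·)).getD (k - 1) 0

/-- `λ₂(G)`, the second smallest normalized Laplacian eigenvalue. -/
noncomputable def lambda2 (G : SimpleGraph V) [DecidableRel G.Adj] : ℝ :=
  nthEig (normLap G) 2

/-- `ρ(𝓛(G)) = λ_n(G)`, the normalized Laplacian spectral radius. -/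
noncomputable def rhoL (G : SimpleGraph V) [DecidableRel G.Adj] : ℝ :=
  nthEig (normLap G) (Fintype.card V)

/-- `f` is a harmonic eigenfunction associated with the eigenvalue `lam` of `𝓛(G)`:
`f ≠ 0` and `L f = lam • D f`. -/
def IsHarmonic (G : SimpleGraph V) [DecidableRel G.Adj] (lam : ℝ) (f : V → ℝ) : Prop :=
  f ≠ 0 ∧ G.lapMatrix ℝ *ᵥ f = fun v => lam * ((G.degree v : ℝ) * f v)

/-- `∑_{uv ∈ E(G)} (f(u) - f(v))²`. -/
noncomputable def edgeSum (G : SimpleGraph V) [DecidableRel G.Adj] (f : V → ℝ) : ℝ :=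
  ∑ e ∈ G.edgeFinset, Sym2.lift ⟨fun u v => (f u - f v) ^ 2, fun u v => by ring⟩ e


/-- The graph obtained from `G` by subdividing the edge `uv`:
delete `uv`, add a new vertex `w = Sum.inr ()` and the edges `uw`, `wv`. -/
def subdivide {V : Type} (G : SimpleGraph V) (u v : V) : SimpleGraph (V ⊕ Unit) where
  Adj x y :=
    match x, y with
    | Sum.inl a, Sum.inl b => G.Adj a b ∧ ¬(a = u ∧ b = v) ∧ ¬(a = v ∧ b = u)
    | Sum.inl a, Sum.inr _ => a = u ∨ a = v
    | Sum.inr _, Sum.inl b => b = u ∨ b = v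
    | Sum.inr _, Sum.inr _ => False
  symm := by
    constructor
    rintro (a | a) (b | b) h
    · exact ⟨h.1.symm, fun hc => h.2.2 ⟨hc.2, hc.1⟩, fun hc => h.2.1 ⟨hc.2, hc.1⟩⟩
    · exact h
    · exact h
    · exact h
  loopless := by
    constructor
    rintro (a | a) h
    · exact G.loopless.irrefl a h.1
    · exact h

instance {V : Type} [DecidableEq V] (G : SimpleGraph V) [DecidableRel G.Adj] (u v : V) :
    DecidableRel (subdivide G u v).Adj := fun x y => by
  rcases x with a | a <;> rcases y with b | b
  · exact inferInstanceAs (Decidable (G.Adj a b ∧ ¬(a = u ∧ b = v) ∧ ¬(a = v ∧ b = u)))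
  · exact inferInstanceAs (Decidable (a = u ∨ a = v))
  · exact inferInstanceAs (Decidable (b = u ∨ b = v))
  · exact inferInstanceAs (Decidable False)

/-- `IsSubdivisionOf H G` : `H` is obtained from `G` (up to isomorphism) by repeatedly
subdividing edges. -/
inductive IsSubdivisionOf : {V W : Type} → SimpleGraph W → SimpleGraph V → Prop
  | iso {V W : Type} {G : SimpleGraph V} {H : SimpleGraph W} :
      Nonempty (G ≃g H) → IsSubdivisionOf H G
  | step {V W : Type} {G : SimpleGraph V} {H : SimpleGraph W} (u v : V) :
      G.Adj u v → IsSubdivisionOf H (subdivide G u v) → IsSubdivisionOf H G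

/-- The graph obtained from `G₁` and `G₂` by identifying `u ∈ V(G₁)` with `v ∈ V(G₂)`;
the merged vertex is `Sum.inl u`. -/
def glue {V₁ V₂ : Type} (G₁ : SimpleGraph V₁) (G₂ : SimpleGraph V₂) (u : V₁) (v : V₂) :
    SimpleGraph (V₁ ⊕ {y : V₂ // y ≠ v}) where
  Adj x y :=
    match x, y with
    | Sum.inl a, Sum.inl b => G₁.Adj a b
    | Sum.inl a, Sum.inr b => a = u ∧ G₂.Adj v b.1
    | Sum.inr a, Sum.inl b => b = u ∧ G₂.Adj v a.1
    | Sum.inr a, Sum.inr b => G₂.Adj a.1 b.1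
  symm := by
    constructor
    rintro (a | a) (b | b) h
    · exact h.symm
    · exact h
    · exact h
    · exact h.symm
  loopless := by
    constructor
    rintro (a | a) h
    · exact G₁.loopless.irrefl a h
    · exact G₂.loopless.irrefl a.1 h

instance {V₁ V₂ : Type} [DecidableEq V₁] (G₁ : SimpleGraph V₁) (G₂ : SimpleGraph V₂)
    [DecidableRel G₁.Adj] [DecidableRel G₂.Adj] (u : V₁) (v : V₂) :
    DecidableRel (glue G₁ G₂ u v).Adj := fun x y => by
  rcases x with a | a <;> rcases y with b | b
  · exact inferInstanceAs (Decidable (G₁.Adj a b))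
  · exact inferInstanceAs (Decidable (a = u ∧ G₂.Adj v b.1))
  · exact inferInstanceAs (Decidable (b = u ∧ G₂.Adj v a.1))
  · exact inferInstanceAs (Decidable (G₂.Adj a.1 b.1))

/-- The graph `G - vv₁ - ⋯ - vvₛ + uv₁ + ⋯ + uvₛ`, where `S = {v₁, …, vₛ}`. -/
def shiftEdges {V : Type} [DecidableEq V] (G : SimpleGraph V) (u v : V) (S : Finset V) :
    SimpleGraph V where
  Adj x y := x ≠ y ∧
    ((G.Adj x y ∧ ¬(x = v ∧ y ∈ S) ∧ ¬(y = v ∧ x ∈ S)) ∨ (x = u ∧ y ∈ S) ∨ (y = u ∧ x ∈ S))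
  symm := by
    constructor
    rintro x y ⟨hxy, h⟩
    refine ⟨hxy.symm, ?_⟩
    rcases h with h | h | h
    · exact Or.inl ⟨h.1.symm, h.2.2, h.2.1⟩
    · exact Or.inr (Or.inr h)
    · exact Or.inr (Or.inl h)
  loopless := ⟨fun x h => h.1 rfl⟩

instance {V : Type} [DecidableEq V] (G : SimpleGraph V) [DecidableRel G.Adj] (u v : V)
    (S : Finset V) : DecidableRel (shiftEdges G u v S).Adj := fun x y =>
  inferInstanceAs (Decidable (_ ∧ _))

/-- The star on `n + 1` vertices, with center `none`. -/
def starGraph (n : ℕ) : SimpleGraph (Option (Fin n)) where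
  Adj i j := (i = none ∧ j ≠ none) ∨ (j = none ∧ i ≠ none)
  symm := by
    constructor
    rintro i j (h | h)
    · exact Or.inr h
    · exact Or.inl h
  loopless := by
    constructor
    rintro i (h | h) <;> exact h.2 h.1

instance (n : ℕ) : DecidableRel (starGraph n).Adj := fun i j =>
  inferInstanceAs (Decidable (_ ∨ _))

/-!
On the plane spanned by the coordinate vectors of two non-adjacent vertices `u`, `v`, the
quadratic form of `𝓛(G)` is at most the squared norm: its diagonal entries are `1` (or `0` at an
isolated vertex) and its `(u, v)` entries vanish. The min–max principle then gives `λ₂ ≤ 1`: if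
`λ_k > c`, fewer than `k` eigenvectors have eigenvalue `≤ c`, so every `k`-dimensional subspace
contains a nonzero vector orthogonal to all of them, on which the form exceeds `c ‖x‖²`.
-/

theorem _root_.List.Pairwise.countP_le_le_of_lt_getElem {α : Type*} [LinearOrder α] {l : List α}
    (hl : l.Pairwise (· ≤ ·)) {m : ℕ} (hm : m < l.length) {c : α} (hc : c < l[m]) :
    l.countP (· ≤ c) ≤ m := by
  induction l generalizing m with
  | nil => simp at hm
  | cons a t ih =>
    rw [List.pairwise_cons] at hl
    cases m with
    | zero =>
      refine (List.countP_eq_zero.2 fun y hy => ?_).le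
      rcases List.mem_cons.1 hy with rfl | hy
      · simpa using hc
      · simpa using hc.trans_le (hl.1 y hy)
    | succ m =>
      have := ih hl.2 (Nat.lt_of_succ_lt_succ hm) hc
      rw [List.countP_cons]
      split <;> omega

open scoped RealInnerProductSpace

theorem _root_.Submodule.exists_ne_zero_forall_inner_eq_zero {𝕜 E ι : Type*} [RCLike 𝕜]
    [NormedAddCommGroup E] [InnerProductSpace 𝕜 E] [FiniteDimensional 𝕜 E] [Fintype ι]
    (W : Submodule 𝕜 E) (v : ι → E) (h : Fintype.card ι < Module.finrank 𝕜 W) :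
    ∃ x ∈ W, x ≠ 0 ∧ ∀ i, inner 𝕜 (v i) x = 0 := by
  let f : W →ₗ[𝕜] ι → 𝕜 := LinearMap.pi fun i => (innerₛₗ 𝕜 (v i)).comp W.subtype
  have hker : LinearMap.ker f ≠ ⊥ := LinearMap.ker_ne_bot_of_finrank_lt (by simpa using h)
  obtain ⟨x, hx, hx0⟩ := Submodule.exists_mem_ne_zero_of_ne_bot hker
  refine ⟨x, x.2, by simpa using hx0, fun i => ?_⟩
  simpa [f] using congr_fun (LinearMap.mem_ker.1 hx) i

section CourantFischer

variable {n : Type} [Fintype n] [DecidableEq n] {A : Matrix n n ℝ}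

theorem card_eigenvalues_le_lt_of_lt_nthEig (hA : A.IsHermitian) {k : ℕ} (hk₀ : 0 < k)
    (hk : k ≤ Fintype.card n) {c : ℝ} (hc : c < nthEig A k) :
    #{i | hA.eigenvalues i ≤ c} < k := by
  set l := A.charpoly.roots.sort (· ≤ ·)
  have hl : (l : Multiset ℝ) = Finset.univ.val.map hA.eigenvalues := by
    rw [Multiset.sort_eq, hA.roots_charpoly_eq_eigenvalues]
    rfl
  have hlen : k - 1 < l.length := by
    have := congrArg Multiset.card hl
    simp only [Multiset.coe_card, Multiset.card_map, Finset.card_val, Finset.card_univ] at this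
    omega
  have hcount : #{i | hA.eigenvalues i ≤ c} = l.countP (· ≤ c) := by
    rw [← Multiset.coe_countP, hl, Multiset.countP_map]; rfl
  rw [nthEig, List.getD_eq_getElem _ _ hlen] at hc
  have hsorted : l.Pairwise (· ≤ ·) := A.charpoly.roots.pairwise_sort _
  have := hsorted.countP_le_le_of_lt_getElem hlen hc
  omega

theorem toEuclideanLin_eigenvectorBasis (hA : A.IsHermitian) (i : n) :
    toEuclideanLin A (hA.eigenvectorBasis i) = hA.eigenvalues i • hA.eigenvectorBasis i := by
  ext j
  simpa [toLpLin_apply] using congr_fun (hA.mulVec_eigenvectorBasis i) j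

theorem inner_toEuclideanLin_self_eq_sum (hA : A.IsHermitian) (x : EuclideanSpace ℝ n) :
    ⟪x, toEuclideanLin A x⟫ = ∑ i, hA.eigenvalues i * ⟪hA.eigenvectorBasis i, x⟫ ^ 2 := by
  rw [← hA.eigenvectorBasis.sum_inner_mul_inner x]
  refine Finset.sum_congr rfl fun i _ => ?_
  rw [← isSymmetric_toEuclideanLin_iff.2 hA, toEuclideanLin_eigenvectorBasis, real_inner_smul_left,
    real_inner_comm x]
  ring

theorem lt_inner_toEuclideanLin_self (hA : A.IsHermitian) {c : ℝ} {x : EuclideanSpace ℝ n}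
    (hx : x ≠ 0) (horth : ∀ i, hA.eigenvalues i ≤ c → ⟪hA.eigenvectorBasis i, x⟫ = 0) :
    c * ‖x‖ ^ 2 < ⟪x, toEuclideanLin A x⟫ := by
  obtain ⟨j, hj⟩ : ∃ j, ⟪hA.eigenvectorBasis j, x⟫ ≠ 0 := by
    by_contra! h
    have : ‖x‖ ^ 2 = 0 := by simp [← hA.eigenvectorBasis.sum_sq_inner_right, h]
    exact hx (by simpa using this)
  rw [inner_toEuclideanLin_self_eq_sum hA, ← hA.eigenvectorBasis.sum_sq_inner_right,
    Finset.mul_sum]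
  refine Finset.sum_lt_sum (fun i _ => ?_) ⟨j, mem_univ j, ?_⟩
  · by_cases hi : hA.eigenvalues i ≤ c
    · simp [horth i hi]
    · exact mul_le_mul_of_nonneg_right (not_le.1 hi).le (sq_nonneg _)
  · exact mul_lt_mul_of_pos_right (not_le.1 fun h => hj (horth j h)) (by positivity)

theorem nthEig_finrank_le_of_forall_inner_le (hA : A.IsHermitian)
    {W : Submodule ℝ (EuclideanSpace ℝ n)} (hW : 0 < Module.finrank ℝ W) {c : ℝ}
    (hc : ∀ x ∈ W, ⟪x, toEuclideanLin A x⟫ ≤ c * ‖x‖ ^ 2) :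
    nthEig A (Module.finrank ℝ W) ≤ c := by
  by_contra! hlt
  have hcard := card_eigenvalues_le_lt_of_lt_nthEig hA hW (by simpa using W.finrank_le) hlt
  obtain ⟨x, hxW, hx0, horth⟩ := W.exists_ne_zero_forall_inner_eq_zero
    (fun i : {i // hA.eigenvalues i ≤ c} => hA.eigenvectorBasis i)
    (by rwa [Fintype.card_subtype])
  exact (hc x hxW).not_gt (lt_inner_toEuclideanLin_self hA hx0 fun i hi => horth ⟨i, hi⟩)

theorem inner_toEuclideanLin_self_le_of_forall_notMem_eq_zero {s : Finset n} {c : ℝ}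
    (hdiag : ∀ i ∈ s, A i i ≤ c) (hoff : ∀ i ∈ s, ∀ j ∈ s, i ≠ j → A i j = 0)
    {x : EuclideanSpace ℝ n} (hx : ∀ j ∉ s, x j = 0) :
    ⟪x, toEuclideanLin A x⟫ ≤ c * ‖x‖ ^ 2 := by
  have hterm : ∀ i j, A i j * x j * x i = if i = j then A i i * x i ^ 2 else 0 := by
    intro i j
    split_ifs with hij
    · subst hij; ring
    · by_cases hi : i ∈ s
      · by_cases hj : j ∈ s
        · simp [hoff i hi j hj hij]
        · simp [hx j hj]
      · simp [hx i hi]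
  calc ⟪x, toEuclideanLin A x⟫ = ∑ i, A i i * x i ^ 2 := by
        simp only [EuclideanSpace.inner_eq_star_dotProduct, toLpLin_apply, dotProduct, mulVec,
          star_trivial, Finset.sum_mul, hterm, Finset.sum_ite_eq, Finset.mem_univ, if_true]
    _ ≤ ∑ i, c * x i ^ 2 := by
        refine Finset.sum_le_sum fun i _ => ?_
        by_cases hi : i ∈ s
        · exact mul_le_mul_of_nonneg_right (hdiag i hi) (sq_nonneg _)
        · simp [hx i hi]
    _ = c * ‖x‖ ^ 2 := by rw [EuclideanSpace.real_norm_sq_eq, Finset.mul_sum]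

theorem nthEig_card_le_of_offDiag_eq_zero (hA : A.IsHermitian) {s : Finset n}
    (hs : s.Nonempty) {c : ℝ} (hdiag : ∀ i ∈ s, A i i ≤ c)
    (hoff : ∀ i ∈ s, ∀ j ∈ s, i ≠ j → A i j = 0) :
    nthEig A #s ≤ c := by
  let e : s → EuclideanSpace ℝ n := fun i => EuclideanSpace.single (i : n) 1
  let W := Submodule.span ℝ (Set.range e)
  have hrank : Module.finrank ℝ W = #s := by
    have he : LinearIndependent ℝ e := by
      simpa [Function.comp_def, e] using
        (EuclideanSpace.basisFun n ℝ).toBasis.linearIndependent.comp _ Subtype.val_injective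
    simpa using finrank_span_eq_card he
  have hsupp : ∀ x ∈ W, ∀ j ∉ s, x j = 0 := by
    intro x hx j hj
    induction hx using Submodule.span_induction with
    | mem y hy =>
      obtain ⟨i, rfl⟩ := hy
      simp [e, ne_of_mem_of_not_mem i.2 hj]
    | zero => rfl
    | add y z _ _ hy hz => simp [hy, hz]
    | smul a y _ hy => simp [hy]
  rw [← hrank]
  exact nthEig_finrank_le_of_forall_inner_le hA (hrank ▸ hs.card_pos) fun x hx =>
    inner_toEuclideanLin_self_le_of_forall_notMem_eq_zero hdiag hoff (hsupp x hx)

end CourantFischer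

section NormalizedLaplacian

variable (G : SimpleGraph V) [DecidableRel G.Adj]

theorem normLap_apply (p q : V) :
    normLap G p q =
      (√(G.degree p : ℝ))⁻¹ * G.lapMatrix ℝ p q * (√(G.degree q : ℝ))⁻¹ := by
  rw [normLap, mul_diagonal, diagonal_mul]

theorem isHermitian_normLap : (normLap G).IsHermitian := by
  simpa [normLap] using isHermitian_conjTranspose_mul_mul
    (diagonal fun v => (√(G.degree v : ℝ))⁻¹) (G.isHermitian_lapMatrix ℝ)

theorem normLap_apply_self_le_one (v : V) : normLap G v v ≤ 1 := by
  have hd : (0 : ℝ) ≤ G.degree v := Nat.cast_nonneg _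
  calc normLap G v v = (√(G.degree v : ℝ))⁻¹ ^ 2 * G.degree v := by
        have hL : G.lapMatrix ℝ v v = G.degree v := by
          simp [SimpleGraph.lapMatrix, SimpleGraph.degMatrix]
        rw [normLap_apply, hL]
        ring
    _ = (G.degree v : ℝ)⁻¹ * G.degree v := by rw [inv_pow, Real.sq_sqrt hd]
    _ ≤ 1 := inv_mul_le_one

theorem normLap_apply_eq_zero_of_not_adj {p q : V} (hpq : p ≠ q) (h : ¬G.Adj p q) :
    normLap G p q = 0 := by
  simp [normLap_apply, SimpleGraph.lapMatrix, SimpleGraph.degMatrix, hpq, h]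

theorem nthEig_normLap_card_le_one {s : Finset V} (hs : s.Nonempty)
    (hind : G.IsIndepSet (s : Set V)) : nthEig (normLap G) #s ≤ 1 :=
  nthEig_card_le_of_offDiag_eq_zero (isHermitian_normLap G) hs
    (fun v _ => normLap_apply_self_le_one G v)
    fun _ hp _ hq hpq => normLap_apply_eq_zero_of_not_adj G hpq (hind hp hq hpq)

end NormalizedLaplacian

theorem stmt4_general {V : Type} [Fintype V] [DecidableEq V] (G : SimpleGraph V) [DecidableRel G.Adj]
    (hnc : G ≠ ⊤) :
    lambda2 G ≤ 1 := by
  obtain ⟨u, v, huv, hnadj⟩ := SimpleGraph.ne_top_iff_exists_not_adj.1 hnc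
  have hind : G.IsIndepSet ({u, v} : Finset V) := by
    have hnadj' : ¬G.Adj v u := fun h => hnadj h.symm
    simp [SimpleGraph.isIndepSet_iff, Set.pairwise_pair, hnadj, hnadj']
  simpa [lambda2, Finset.card_pair huv] using
    nthEig_normLap_card_le_one G (Finset.insert_nonempty u {v}) hind

/-- Lemma 2.4: for a connected graph which is not a complete graph, `λ₂(G) ≤ 1`. -/
theorem stmt4 {V : Type} [Fintype V] [DecidableEq V] (G : SimpleGraph V) [DecidableRel G.Adj]
    (hG : G.Connected) (hnc : G ≠ ⊤) :
    lambda2 G ≤ 1 :=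
  stmt4_general G hnc

end NLap
end

section
/- Let G be a simple connected graph of order n with uv ∈ E(G), let G′ = G − uv + uw + wv be obtained by subdividing the edge uv, and let f be a harmonic eigenfunction associated with λ₂(G). If f(u)f(v) ≠ 0, then λ₂(G) > λ₂(G′) strictly. -/
open Matrix Finset BigOperators

/-!
`λ₂` is bounded above by the Rayleigh quotient `gᵀ L g / (∑ d g² - (∑ d g)² / vol)` of every test
function `g`: the denominator is the degree-weighted variance, which projects out the constants
spanning the kernel. Since `G` is connected, `λ₂(G) > 0`, so the harmonic eigenfunction `f` is
degree-orthogonal to the constants and its own quotient is `λ₂(G)`. On the subdivided graph take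
`g = f` on `V` and `g(w) = (f u + f v) / 2` at the new vertex: compared with `f`, the numerator
drops by `(f u - f v)² / 2` and the denominator grows by `2 g(w)² · vol / (vol + 2) ≥ 0`. As
`f u * f v ≠ 0`, at least one of the two changes is strict, so `λ₂(G') < λ₂(G)`.
-/

namespace NLap

theorem countP_lt_getD_one_le_one {α : Type} [LinearOrder α] {l : List α}
    (hl : l.Pairwise (· ≤ ·)) (d : α) : l.countP (· < l.getD 1 d) ≤ 1 := by
  match l, hl with
  | [], _ => simp
  | [_], _ => exact List.countP_le_length.trans (by simp)
  | a :: b :: tl, hl =>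
    have hrest : (b :: tl).countP (· < b) = 0 := List.countP_eq_zero.mpr fun c hc => by
      rcases List.mem_cons.mp hc with rfl | hc
      · simp
      · simpa using (List.pairwise_cons.mp hl.of_cons).1 c hc
    show (a :: b :: tl).countP (· < b) ≤ 1
    rw [List.countP_cons, hrest, zero_add]
    split_ifs <;> simp

theorem two_le_countP_le_getD_one {α : Type} [LinearOrder α] {l : List α}
    (hl : l.Pairwise (· ≤ ·)) (h2 : 2 ≤ l.length) (d : α) : 2 ≤ l.countP (· ≤ l.getD 1 d) := by
  match l, hl, h2 with
  | a :: b :: tl, hl, _ =>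
    have hab : a ≤ b := (List.pairwise_cons.mp hl).1 b (by simp)
    simp [hab]

section LinearAlgebra

variable {n : Type} [Fintype n]

theorem dotProduct_eq_sum_orthonormalBasis {ι : Type} [Fintype ι]
    (b : OrthonormalBasis ι ℝ (EuclideanSpace ℝ n)) (x y : n → ℝ) :
    x ⬝ᵥ y = ∑ i, (⇑(b i) ⬝ᵥ x) * (⇑(b i) ⬝ᵥ y) := by
  have h := b.sum_inner_mul_inner (WithLp.toLp 2 y) (WithLp.toLp 2 x)
  simp only [EuclideanSpace.inner_eq_star_dotProduct, star_trivial] at h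
  rw [← h]
  exact Finset.sum_congr rfl fun i _ => by rw [mul_comm, dotProduct_comm x]

variable [DecidableEq n]

theorem card_filter_eigenvalues_lt_nthEig_two_le_one {M : Matrix n n ℝ} (hM : M.IsHermitian) :
    #{i | hM.eigenvalues i < nthEig M 2} ≤ 1 := by
  have h := countP_lt_getD_one_le_one (Multiset.pairwise_sort M.charpoly.roots (· ≤ ·)) 0
  change List.countP (· < nthEig M 2) _ ≤ 1 at h
  rw [← Multiset.coe_countP, Multiset.sort_eq, hM.roots_charpoly_eq_eigenvalues,
    Multiset.countP_map] at h
  convert h using 1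
  simp [Finset.card]

theorem two_le_card_filter_eigenvalues_le_nthEig_two {M : Matrix n n ℝ} (hM : M.IsHermitian)
    (hn : 2 ≤ Fintype.card n) : 2 ≤ #{i | hM.eigenvalues i ≤ nthEig M 2} := by
  have hlen : 2 ≤ (M.charpoly.roots.sort (· ≤ ·)).length := by
    simpa [Multiset.length_sort, hM.roots_charpoly_eq_eigenvalues] using hn
  have h := two_le_countP_le_getD_one (Multiset.pairwise_sort M.charpoly.roots (· ≤ ·)) hlen 0
  change 2 ≤ List.countP (· ≤ nthEig M 2) _ at h
  rw [← Multiset.coe_countP, Multiset.sort_eq, hM.roots_charpoly_eq_eigenvalues,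
    Multiset.countP_map] at h
  convert h using 1
  simp [Finset.card]

theorem eigenvectorBasis_dotProduct_mulVec {M : Matrix n n ℝ} (hM : M.IsHermitian) (i : n)
    (x : n → ℝ) :
    ⇑(hM.eigenvectorBasis i) ⬝ᵥ (M *ᵥ x) = hM.eigenvalues i * (⇑(hM.eigenvectorBasis i) ⬝ᵥ x) := by
  rw [dotProduct_mulVec, ← mulVec_transpose, ← conjTranspose_eq_transpose_of_trivial, hM.eq,
    hM.mulVec_eigenvectorBasis, smul_dotProduct, smul_eq_mul]

theorem nthEig_two_mul_dotProduct_self_le {M : Matrix n n ℝ} (hM : M.PosSemidef) {φ x : n → ℝ}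
    (hφ : φ ≠ 0) (hMφ : M *ᵥ φ = 0) (hx : φ ⬝ᵥ x = 0) :
    nthEig M 2 * (x ⬝ᵥ x) ≤ x ⬝ᵥ (M *ᵥ x) := by
  rcases le_or_gt (nthEig M 2) 0 with hpos | hpos
  · have := hM.dotProduct_mulVec_nonneg x
    rw [star_trivial] at this
    have hxx := dotProduct_self_star_nonneg x
    rw [star_trivial] at hxx
    nlinarith
  have hcoef := eigenvectorBasis_dotProduct_mulVec hM.1
  have hcard := card_filter_eigenvalues_lt_nthEig_two_le_one hM.1
  generalize hM.1.eigenvectorBasis = b at hcoef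
  generalize hM.1.eigenvalues = μ at hcoef hcard
  -- At most one eigenvalue lies below `nthEig M 2 > 0`, and `φ ∈ ker M` is a multiple of its
  -- eigenvector, so `x ⟂ φ` has no component along it.
  have hx0 : ∀ i, μ i < nthEig M 2 → ⇑(b i) ⬝ᵥ x = 0 := by
    intro i hi
    have hφj : ∀ j ≠ i, ⇑(b j) ⬝ᵥ φ = 0 := by
      intro j hj
      have hμj : nthEig M 2 ≤ μ j := by
        by_contra! h
        exact hj (Finset.card_le_one.mp hcard j (by simpa using h) i (by simpa using hi))
      have := hcoef j φ
      rw [hMφ, dotProduct_zero, eq_comm, mul_eq_zero] at this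
      exact this.resolve_left (by linarith)
    have hsum := dotProduct_eq_sum_orthonormalBasis b φ x
    rw [hx, Finset.sum_eq_single i (fun j _ hj => by simp [hφj j hj]) (by simp)] at hsum
    refine (mul_eq_zero.mp hsum.symm).resolve_left fun h => hφ ?_
    rw [← dotProduct_self_eq_zero, dotProduct_eq_sum_orthonormalBasis b]
    refine Finset.sum_eq_zero fun j _ => ?_
    obtain rfl | hj := eq_or_ne j i
    · simp [h]
    · simp [hφj j hj]
  rw [dotProduct_eq_sum_orthonormalBasis b x x, dotProduct_eq_sum_orthonormalBasis b x,
    Finset.mul_sum]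
  refine Finset.sum_le_sum fun i _ => ?_
  rw [hcoef]
  rcases lt_or_ge (μ i) (nthEig M 2) with h | h
  · simp [hx0 i h]
  · nlinarith [mul_self_nonneg (⇑(b i) ⬝ᵥ x)]

theorem nthEig_two_pos {M : Matrix n n ℝ} (hM : M.PosSemidef)
    (hrank : Fintype.card n ≤ M.rank + 1) (hn : 2 ≤ Fintype.card n) : 0 < nthEig M 2 := by
  by_contra! h
  have hzero : ({i | hM.1.eigenvalues i ≤ nthEig M 2} : Finset n) ⊆
      ({i | hM.1.eigenvalues i = 0} : Finset n) := fun i hi => by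
    simp only [Finset.mem_filter, Finset.mem_univ, true_and] at hi ⊢
    linarith [hM.eigenvalues_nonneg i]
  have h2 :=
    (two_le_card_filter_eigenvalues_le_nthEig_two hM.1 hn).trans (Finset.card_le_card hzero)
  have hsplit := Finset.card_filter_add_card_filter_not (s := Finset.univ)
    (fun i => hM.1.eigenvalues i = 0)
  rw [hM.1.rank_eq_card_non_zero_eigs, Fintype.card_subtype] at hrank
  simp only [Finset.card_univ, ← ne_eq] at hsplit
  omega

end LinearAlgebra

section GraphSpectrum

variable {V : Type} [Fintype V] (G : SimpleGraph V) [DecidableRel G.Adj]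

noncomputable def sqrtDeg : V → ℝ := fun w => √(G.degree w : ℝ)

theorem sqrtDeg_mul_self (w : V) : sqrtDeg G w * sqrtDeg G w = G.degree w :=
  Real.mul_self_sqrt (Nat.cast_nonneg _)

theorem sqrtDeg_dotProduct_sqrtDeg_mul (g : V → ℝ) :
    sqrtDeg G ⬝ᵥ (sqrtDeg G * g) = ∑ w, (G.degree w : ℝ) * g w := by
  simp only [dotProduct, Pi.mul_apply, ← mul_assoc, sqrtDeg_mul_self]

theorem sqrtDeg_mul_dotProduct_self (g : V → ℝ) :
    (sqrtDeg G * g) ⬝ᵥ (sqrtDeg G * g) = ∑ w, (G.degree w : ℝ) * g w ^ 2 := by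
  simp only [dotProduct, Pi.mul_apply]
  exact Finset.sum_congr rfl fun w _ => by rw [← sqrtDeg_mul_self]; ring

variable {G}

theorem sqrtDeg_pos (hdeg : ∀ w, 0 < G.degree w) (w : V) : 0 < sqrtDeg G w :=
  Real.sqrt_pos.mpr (by exact_mod_cast hdeg w)

theorem sqrtDeg_ne_zero [Nonempty V] (hdeg : ∀ w, 0 < G.degree w) : sqrtDeg G ≠ 0 := by
  obtain ⟨w⟩ := ‹Nonempty V›
  exact Function.ne_iff.mpr ⟨w, (sqrtDeg_pos hdeg w).ne'⟩

variable [DecidableEq V]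

theorem normLap_posSemidef : (normLap G).PosSemidef := by
  have h := (SimpleGraph.posSemidef_lapMatrix ℝ G).conjTranspose_mul_mul_same
    (diagonal fun v => (√(G.degree v : ℝ))⁻¹)
  rwa [diagonal_conjTranspose, star_trivial] at h

theorem normLap_mulVec_sqrtDeg_mul (hdeg : ∀ w, 0 < G.degree w) (g : V → ℝ) :
    normLap G *ᵥ (sqrtDeg G * g) = diagonal (fun v => (√(G.degree v : ℝ))⁻¹) *ᵥ
      (G.lapMatrix ℝ *ᵥ g) := by
  have hcancel : diagonal (fun v => (√(G.degree v : ℝ))⁻¹) *ᵥ (sqrtDeg G * g) = g := by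
    funext w
    have : √(G.degree w : ℝ) ≠ 0 := (sqrtDeg_pos hdeg w).ne'
    simp [mulVec_diagonal, sqrtDeg, this]
  rw [normLap, ← mulVec_mulVec, ← mulVec_mulVec, hcancel]

theorem normLap_mulVec_sqrtDeg (hdeg : ∀ w, 0 < G.degree w) : normLap G *ᵥ sqrtDeg G = 0 := by
  have h := normLap_mulVec_sqrtDeg_mul hdeg 1
  rwa [mul_one, show (1 : V → ℝ) = fun _ => 1 from rfl,
    SimpleGraph.lapMatrix_mulVec_const_eq_zero, mulVec_zero] at h

theorem sqrtDeg_mul_dotProduct_normLap_mulVec (hdeg : ∀ w, 0 < G.degree w) (g : V → ℝ) :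
    (sqrtDeg G * g) ⬝ᵥ (normLap G *ᵥ (sqrtDeg G * g)) = g ⬝ᵥ (G.lapMatrix ℝ *ᵥ g) := by
  rw [normLap_mulVec_sqrtDeg_mul hdeg]
  simp only [dotProduct, mulVec_diagonal, Pi.mul_apply]
  refine Finset.sum_congr rfl fun w _ => ?_
  have : √(G.degree w : ℝ) ≠ 0 := (sqrtDeg_pos hdeg w).ne'
  simp only [sqrtDeg]
  field_simp

theorem rank_normLap_add_one (hG : G.Connected) (hdeg : ∀ w, 0 < G.degree w) :
    (normLap G).rank + 1 = Fintype.card V := by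
  have hdet : IsUnit (diagonal fun v => (√(G.degree v : ℝ))⁻¹).det := by
    rw [det_diagonal, isUnit_iff_ne_zero, Finset.prod_ne_zero_iff]
    exact fun w _ => inv_ne_zero (sqrtDeg_pos hdeg w).ne'
  have hker : Module.finrank ℝ (LinearMap.ker (G.lapMatrix ℝ).mulVecLin) = 1 := by
    rw [← toLin'_apply', ← SimpleGraph.card_connectedComponent_eq_finrank_ker_toLin'_lapMatrix]
    have := hG.preconnected.subsingleton_connectedComponent
    have : Nonempty G.ConnectedComponent := hG.nonempty.map G.connectedComponentMk
    exact le_antisymm (Fintype.card_le_one_iff_subsingleton.mpr ‹_›) Fintype.card_pos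
  rw [normLap, rank_mul_eq_left_of_isUnit_det _ _ hdet, rank_mul_eq_right_of_isUnit_det _ _ hdet,
    ← hker, rank, LinearMap.finrank_range_add_finrank_ker, Module.finrank_fintype_fun_eq_card]

theorem lambda2_pos (hG : G.Connected) (hdeg : ∀ w, 0 < G.degree w)
    (hn : 2 ≤ Fintype.card V) : 0 < lambda2 G :=
  nthEig_two_pos normLap_posSemidef (rank_normLap_add_one hG hdeg).ge hn

theorem lambda2_mul_le_of_sum_degree_mul_eq_zero (hdeg : ∀ w, 0 < G.degree w) {g : V → ℝ}
    (hg : ∑ w, (G.degree w : ℝ) * g w = 0) :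
    lambda2 G * ∑ w, (G.degree w : ℝ) * g w ^ 2 ≤ g ⬝ᵥ (G.lapMatrix ℝ *ᵥ g) := by
  cases isEmpty_or_nonempty V
  · simp [Finset.univ_eq_empty]
  rw [← sqrtDeg_mul_dotProduct_self, ← sqrtDeg_mul_dotProduct_normLap_mulVec hdeg]
  exact nthEig_two_mul_dotProduct_self_le normLap_posSemidef (sqrtDeg_ne_zero hdeg)
    (normLap_mulVec_sqrtDeg hdeg) (by rwa [sqrtDeg_dotProduct_sqrtDeg_mul])

theorem lambda2_mul_le (hdeg : ∀ w, 0 < G.degree w) (g : V → ℝ) :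
    lambda2 G * (∑ w, (G.degree w : ℝ) * g w ^ 2 -
      (∑ w, (G.degree w : ℝ) * g w) ^ 2 / ∑ w, (G.degree w : ℝ)) ≤
      g ⬝ᵥ (G.lapMatrix ℝ *ᵥ g) := by
  set vol := ∑ w, (G.degree w : ℝ)
  set t := (∑ w, (G.degree w : ℝ) * g w) / vol
  cases isEmpty_or_nonempty V
  · simp [Finset.univ_eq_empty]
  have hvol : 0 < vol := Finset.sum_pos (fun w _ => by exact_mod_cast hdeg w) Finset.univ_nonempty
  have hshift : ∑ w, (G.degree w : ℝ) * (g w - t) = 0 := by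
    simp only [mul_sub, Finset.sum_sub_distrib, ← Finset.sum_mul, t]
    field_simp
    ring
  have h := lambda2_mul_le_of_sum_degree_mul_eq_zero hdeg hshift
  have hquad : (fun w => g w - t) ⬝ᵥ (G.lapMatrix ℝ *ᵥ fun w => g w - t) =
      g ⬝ᵥ (G.lapMatrix ℝ *ᵥ g) := by
    simp only [← toLinearMap₂'_apply', SimpleGraph.lapMatrix_toLinearMap₂',
      sub_sub_sub_cancel_right]
  have hden : ∑ w, (G.degree w : ℝ) * (g w - t) ^ 2 = ∑ w, (G.degree w : ℝ) * g w ^ 2 -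
      (∑ w, (G.degree w : ℝ) * g w) ^ 2 / vol := by
    have hexpand : ∀ w, (G.degree w : ℝ) * (g w - t) ^ 2 =
        (G.degree w : ℝ) * g w ^ 2 - 2 * t * ((G.degree w : ℝ) * g w) + t ^ 2 * G.degree w :=
      fun w => by ring
    simp only [hexpand, Finset.sum_add_distrib, Finset.sum_sub_distrib, ← Finset.mul_sum, t]
    field_simp
    ring
  rwa [hquad, hden] at h

end GraphSpectrum

section Subdivision

variable {V : Type} {G : SimpleGraph V} {u v : V}

@[simp]
theorem subdivide_adj_inl_inl {a b : V} : (subdivide G u v).Adj (.inl a) (.inl b) ↔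
    G.Adj a b ∧ ¬(a = u ∧ b = v) ∧ ¬(a = v ∧ b = u) :=
  Iff.rfl

@[simp]
theorem subdivide_adj_inl_inr {a : V} {t : Unit} :
    (subdivide G u v).Adj (.inl a) (.inr t) ↔ a = u ∨ a = v :=
  Iff.rfl

@[simp]
theorem subdivide_adj_inr_inl {b : V} {t : Unit} :
    (subdivide G u v).Adj (.inr t) (.inl b) ↔ b = u ∨ b = v :=
  Iff.rfl

@[simp]
theorem subdivide_not_adj_inr_inr {s t : Unit} : ¬(subdivide G u v).Adj (.inr s) (.inr t) :=
  id

variable [Fintype V] [DecidableEq V] [DecidableRel G.Adj]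

theorem sum_subdivide_adj_inl (huv : G.Adj u v) (a : V) (W : V ⊕ Unit → ℝ) :
    ∑ y, (if (subdivide G u v).Adj (.inl a) y then W y else 0) =
      ∑ b, (if G.Adj a b then W (.inl b) else 0) -
        (if a = u then W (.inl v) - W (.inr ()) else 0) -
        (if a = v then W (.inl u) - W (.inr ()) else 0) := by
  have hterm : ∀ b, (if G.Adj a b ∧ ¬(a = u ∧ b = v) ∧ ¬(a = v ∧ b = u) then W (.inl b) else 0) =
      (if G.Adj a b then W (.inl b) else 0) - (if a = u ∧ b = v then W (.inl b) else 0) -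
        (if a = v ∧ b = u then W (.inl b) else 0) := by
    intro b
    by_cases h1 : a = u ∧ b = v
    · obtain ⟨rfl, rfl⟩ := h1
      simp [huv, huv.ne.symm]
    by_cases h2 : a = v ∧ b = u
    · obtain ⟨rfl, rfl⟩ := h2
      simp [huv.symm, huv.ne]
    simp [h1, h2]
  rw [Fintype.sum_sum_type]
  simp only [subdivide_adj_inl_inl, subdivide_adj_inl_inr, hterm, Finset.sum_sub_distrib,
    Finset.univ_unique, Finset.sum_singleton, ite_and, Finset.sum_ite_irrel, Finset.sum_ite_eq',
    Finset.mem_univ, if_true]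
  rcases eq_or_ne a u with rfl | hu <;> rcases eq_or_ne a v with rfl | hv
  · exact absurd rfl huv.ne
  · simp only [↓reduceIte, hv, Finset.sum_const_zero, sub_zero, or_false, PUnit.default_eq_unit]
    ring
  · simp only [hu, ↓reduceIte, Finset.sum_const_zero, sub_zero, or_true, PUnit.default_eq_unit]
    ring
  · simp only [hu, ↓reduceIte, Finset.sum_const_zero, sub_zero, hv, or_self, add_zero]

theorem sum_subdivide_adj_inr (huv : G.Adj u v) (W : V ⊕ Unit → ℝ) :
    ∑ y, (if (subdivide G u v).Adj (.inr ()) y then W y else 0) = W (.inl u) + W (.inl v) := by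
  rw [Fintype.sum_sum_type, ← Finset.sum_filter]
  simp only [subdivide_adj_inr_inl, subdivide_not_adj_inr_inr, if_false, Finset.sum_const_zero,
    add_zero]
  rw [show Finset.univ.filter (fun b => b = u ∨ b = v) = {u, v} by ext; simp,
    Finset.sum_pair huv.ne]

theorem subdivide_degree_inl (huv : G.Adj u v) (a : V) :
    (subdivide G u v).degree (.inl a) = G.degree a := by
  have h := sum_subdivide_adj_inl huv a fun _ => (1 : ℝ)
  simp only [sub_self, ite_self, sub_zero, ← SimpleGraph.degree_eq_sum_if_adj] at h
  exact_mod_cast h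

theorem subdivide_degree_inr (huv : G.Adj u v) : (subdivide G u v).degree (.inr ()) = 2 := by
  have h := sum_subdivide_adj_inr huv fun _ => (1 : ℝ)
  rw [← SimpleGraph.degree_eq_sum_if_adj] at h
  norm_num at h
  exact_mod_cast h

theorem sum_subdivide_degree_mul (huv : G.Adj u v) (h : V ⊕ Unit → ℝ) :
    ∑ x, ((subdivide G u v).degree x : ℝ) * h x =
      ∑ a, (G.degree a : ℝ) * h (.inl a) + 2 * h (.inr ()) := by
  simp [Fintype.sum_sum_type, subdivide_degree_inl huv, subdivide_degree_inr huv]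

theorem subdivide_dotProduct_lapMatrix_mulVec (huv : G.Adj u v) (f : V → ℝ) (c : ℝ) :
    Sum.elim f (fun _ => c) ⬝ᵥ ((subdivide G u v).lapMatrix ℝ *ᵥ Sum.elim f fun _ => c) =
      f ⬝ᵥ (G.lapMatrix ℝ *ᵥ f) - (f u - f v) ^ 2 + (f u - c) ^ 2 + (f v - c) ^ 2 := by
  simp only [← toLinearMap₂'_apply', SimpleGraph.lapMatrix_toLinearMap₂']
  rw [Fintype.sum_sum_type, Fintype.sum_unique (ι := Unit)]
  simp only [sum_subdivide_adj_inl huv, PUnit.default_eq_unit, sum_subdivide_adj_inr huv,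
    Sum.elim_inl, Sum.elim_inr, Finset.sum_sub_distrib, Finset.sum_ite_eq', Finset.mem_univ,
    if_true]
  ring

theorem lambda2_subdivide_mul_le (hdeg : ∀ w, 0 < G.degree w) (huv : G.Adj u v) (f : V → ℝ)
    (c : ℝ) :
    lambda2 (subdivide G u v) * (∑ a, (G.degree a : ℝ) * f a ^ 2 + 2 * c ^ 2 -
      (∑ a, (G.degree a : ℝ) * f a + 2 * c) ^ 2 / (∑ a, (G.degree a : ℝ) + 2)) ≤
      f ⬝ᵥ (G.lapMatrix ℝ *ᵥ f) - (f u - f v) ^ 2 + (f u - c) ^ 2 + (f v - c) ^ 2 := by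
  have hdeg' : ∀ x, 0 < (subdivide G u v).degree x := by
    rintro (a | ⟨⟩)
    · rw [subdivide_degree_inl huv]; exact hdeg a
    · rw [subdivide_degree_inr huv]; norm_num
  have h := lambda2_mul_le hdeg' (Sum.elim f fun _ => c)
  have hvol := sum_subdivide_degree_mul huv fun _ => 1
  simp only [mul_one] at hvol
  rwa [sum_subdivide_degree_mul huv, sum_subdivide_degree_mul huv, hvol,
    subdivide_dotProduct_lapMatrix_mulVec huv] at h

theorem lambda2_subdivide_mul_le_of_sum_degree_mul_eq_zero (hdeg : ∀ w, 0 < G.degree w)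
    (huv : G.Adj u v) {f : V → ℝ} (hf : ∑ a, (G.degree a : ℝ) * f a = 0) :
    lambda2 (subdivide G u v) * (∑ a, (G.degree a : ℝ) * f a ^ 2 +
      (f u + f v) ^ 2 / 2 * ((∑ a, (G.degree a : ℝ)) / (∑ a, (G.degree a : ℝ) + 2))) ≤
      f ⬝ᵥ (G.lapMatrix ℝ *ᵥ f) - (f u - f v) ^ 2 / 2 := by
  have h := lambda2_subdivide_mul_le hdeg huv f ((f u + f v) / 2)
  rw [hf] at h
  have hvol : 0 < ∑ a, (G.degree a : ℝ) + 2 := by positivity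
  calc _ = _ := by congr 1; field_simp; ring
    _ ≤ _ := h
    _ = _ := by ring

end Subdivision

section Harmonic

variable {V : Type} [Fintype V] [DecidableEq V] {G : SimpleGraph V} [DecidableRel G.Adj]
  {lam : ℝ} {f : V → ℝ}

theorem sum_degree_mul_eq_zero_of_lapMatrix_mulVec_eq
    (hf : G.lapMatrix ℝ *ᵥ f = fun w => lam * ((G.degree w : ℝ) * f w)) (hlam : lam ≠ 0) :
    ∑ w, (G.degree w : ℝ) * f w = 0 := by
  have h : (fun _ => (1 : ℝ)) ⬝ᵥ (G.lapMatrix ℝ *ᵥ f) = 0 := by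
    rw [dotProduct_mulVec, ← mulVec_transpose, (SimpleGraph.isSymm_lapMatrix ℝ G).eq,
      SimpleGraph.lapMatrix_mulVec_const_eq_zero, zero_dotProduct]
  simp only [hf, dotProduct, one_mul, ← Finset.mul_sum] at h
  exact (mul_eq_zero.mp h).resolve_left hlam

theorem dotProduct_lapMatrix_mulVec_eq
    (hf : G.lapMatrix ℝ *ᵥ f = fun w => lam * ((G.degree w : ℝ) * f w)) :
    f ⬝ᵥ (G.lapMatrix ℝ *ᵥ f) = lam * ∑ w, (G.degree w : ℝ) * f w ^ 2 := by
  simp only [hf, dotProduct, Finset.mul_sum]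
  exact Finset.sum_congr rfl fun w _ => by ring

end Harmonic

/-- Theorem 3.1 (second part): if `f` is a harmonic eigenfunction associated with `λ₂(G)`
and `f(u)f(v) ≠ 0`, then `λ₂(G) > λ₂(G')` where `G' = G - uv + uw + wv`. -/
theorem stmt8 {V : Type} [Fintype V] [DecidableEq V] (G : SimpleGraph V) [DecidableRel G.Adj]
    (hG : G.Connected) (u v : V) (huv : G.Adj u v) (f : V → ℝ)
    (hf : IsHarmonic G (lambda2 G) f) (hfuv : f u * f v ≠ 0) :
    lambda2 (subdivide G u v) < lambda2 G := by
  have : Nontrivial V := nontrivial_of_ne u v huv.ne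
  have hdeg : ∀ w, 0 < G.degree w := fun w => hG.preconnected.degree_pos_of_nontrivial w
  have hpos : 0 < lambda2 G := lambda2_pos hG hdeg Fintype.one_lt_card
  have hvol : 0 < ∑ w, (G.degree w : ℝ) :=
    Finset.sum_pos (fun w _ => by exact_mod_cast hdeg w) Finset.univ_nonempty
  have hbound := lambda2_subdivide_mul_le_of_sum_degree_mul_eq_zero hdeg huv
    (sum_degree_mul_eq_zero_of_lapMatrix_mulVec_eq hf.2 hpos.ne')
  rw [dotProduct_lapMatrix_mulVec_eq hf.2] at hbound
  set vol := ∑ w, (G.degree w : ℝ)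
  have hgap : 0 < (f u - f v) ^ 2 / 2 + lambda2 G * ((f u + f v) ^ 2 / 2 * (vol / (vol + 2))) := by
    rcases eq_or_ne (f u) (f v) with h | h
    · have : f u + f v ≠ 0 := by
        rw [h, ← two_mul]
        exact mul_ne_zero two_ne_zero (right_ne_zero_of_mul hfuv)
      positivity
    · have := sub_ne_zero.mpr h
      positivity
  exact lt_of_mul_lt_mul_right (hbound.trans_lt (by rw [mul_add]; linarith)) (by positivity)

end NLap
end
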